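/- arXiv:1911.10590 — 4 statements merged into one kernel-verified Lean document; each statement's English description precedes it below -/
import Mathlib

section
/- For every integer n ≥ 2, the dynamical degree of the Perron number θ_n^{-1} equals n, i.e. dyg(θ_n^{-1}) = n; moreover, the degree of θ_n^{-1} over ℚ equals n when n ≢ 5 (mod 6), and equals n − 2 when n ≡ 5 (mod 6). -/
/-!
`θ_n⁻¹` is a root of the unit trinomial `f = X ^ n - X ^ (n - 1) - 1`, whose mirror is
`1 - X - X ^ n`. Since `X ^ 2 - X + 1 = (1 - X) * f.mirror - X * f`, a common complex root of `f`
and its mirror is a primitive sixth root of unity, which forces `n ≡ 5 (mod 6)`; otherwise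
Ljunggren's criterion makes `f` irreducible. When `n ≡ 5 (mod 6)` we have `f = Φ₆ * G`. For unit
trinomials, `q * q.mirror = f * f.mirror` forces `q = ±f` or `q = ±f.mirror`, so any factorization
`f = (Φ₆ * A) * B` has a factor that is its own mirror up to sign; such a factor divides `Φ₆`, and
as `Φ₆ ^ 2 ∤ f` this leaves `A` or `B` a unit, so `G` is irreducible.
The dynamical degree is `n` because `θ_n` increases with `n` and `θ_2⁻¹` is the golden ratio.
-/

open Polynomial

namespace Polynomial

theorem dvd_mirror_of_dvd {R : Type*} [Semiring R] [NoZeroDivisors R] {p w : R[X]} (hw : w ∣ p)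
    (hmw : Associated w.mirror w) : w ∣ p.mirror := by
  obtain ⟨v, rfl⟩ := hw
  rw [mirror_mul_of_domain]
  exact dvd_mul_of_dvd_left hmw.symm.dvd _

namespace IsUnitTrinomial

theorem associated_of_mul_mirror_eq {p q : ℤ[X]} (hp : p.IsUnitTrinomial)
    (h : p * p.mirror = q * q.mirror) : Associated q p ∨ Associated q p.mirror := by
  obtain ⟨k', m', n', hkm', hmn', x, y, z, hq⟩ := (isUnitTrinomial_iff'' h).mp hp
  obtain ⟨k, m, n, hkm, hmn, u, v, w, hp⟩ := hp
  have hk : k' = k := by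
    rw [← mul_right_inj' two_ne_zero, ← trinomial_natTrailingDegree hkm hmn u.ne_zero, ← hp,
      ← natTrailingDegree_mul_mirror, h, natTrailingDegree_mul_mirror, hq,
      trinomial_natTrailingDegree hkm' hmn' x.ne_zero]
  have hn : n' = n := by
    rw [← mul_right_inj' two_ne_zero, ← trinomial_natDegree hkm hmn w.ne_zero, ← hp,
      ← natDegree_mul_mirror, h, natDegree_mul_mirror, hq, trinomial_natDegree hkm' hmn' z.ne_zero]
  subst hk hn
  -- Rescaling `q` by the unit `s` matches its middle coefficient with that of `p`.
  set s : ℤˣ := v * y⁻¹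
  have hs : C (s : ℤ) * q = trinomial k' m' n' ↑(s * x) ↑v ↑(s * z) := by
    have hy : C ((y⁻¹ : ℤˣ) : ℤ) * C (y : ℤ) = 1 := by rw [← C_mul, Units.inv_mul, C_1]
    simp only [hq, trinomial_def, s, Units.val_mul, C_mul]
    linear_combination C (v : ℤ) * X ^ m' * hy
  have hsq : C (s : ℤ) * q * (C (s : ℤ) * q).mirror = q * q.mirror := by
    rw [mirror_mul_of_domain, mirror_C, mul_mul_mul_comm, ← C_mul, ← Units.val_mul,
      Int.units_mul_self, Units.val_one, C_1, one_mul]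
  have hassoc : Associated q (C (s : ℤ) * q) :=
    ⟨Units.map C.toMonoidHom s, by rw [mul_comm]; rfl⟩
  rcases irreducible_aux3 hkm hmn hkm' hmn' u v w _ _ hp hs (h.trans hsq.symm) with h' | h'
  · exact .inl (h' ▸ hassoc)
  · exact .inr (h' ▸ hassoc)

theorem associated_mirror_of_eq_mul {p A B : ℤ[X]} (hp : p.IsUnitTrinomial) (h : p = A * B) :
    Associated A.mirror A ∨ Associated B.mirror B := by
  have hA : A ≠ 0 := left_ne_zero_of_mul (h ▸ hp.ne_zero)
  have hB : B.mirror ≠ 0 := mirror_eq_zero.not.mpr (right_ne_zero_of_mul (h ▸ hp.ne_zero))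
  have hk : p * p.mirror = A * B.mirror * (A * B.mirror).mirror := by
    rw [h, mirror_mul_of_domain, mirror_mul_of_domain, mirror_mirror]; ring
  rcases hp.associated_of_mul_mirror_eq hk with h' | h'
  · rw [h] at h'
    exact .inr (h'.of_mul_left (.refl A) hA)
  · rw [h, mirror_mul_of_domain] at h'
    exact .inl (h'.of_mul_right (.refl _) hB).symm

end IsUnitTrinomial

theorem natDegree_minpoly_rat_of_irreducible {K : Type*} [Field K] [Algebra ℚ K] {p : ℤ[X]}
    (hp : p.Monic) (hirr : Irreducible p) {β : K} (hβ : aeval β p = 0) :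
    (minpoly ℚ β).natDegree = p.natDegree := by
  have hirrℚ := (IsPrimitive.Int.irreducible_iff_irreducible_map_cast hp.isPrimitive).mp hirr
  have hβℚ : aeval β (p.map (Int.castRingHom ℚ)) = 0 := by
    rwa [← algebraMap_int_eq, aeval_map_algebraMap]
  rw [← minpoly.eq_of_irreducible_of_monic hirrℚ hβℚ (hp.map _), hp.natDegree_map]

end Polynomial

/-- `-X ^ n * G_n (1 / X)`, the monic polynomial with root `θ_n⁻¹`. -/
noncomputable def reciprocalTrinomial (n : ℕ) : ℤ[X] := X ^ n - X ^ (n - 1) - 1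

namespace reciprocalTrinomial

variable {n : ℕ}

theorem eq_trinomial :
    reciprocalTrinomial n = trinomial 0 (n - 1) n ↑(-1 : ℤˣ) ↑(-1 : ℤˣ) ↑(1 : ℤˣ) := by
  simp only [reciprocalTrinomial, trinomial_def, Units.val_neg, Units.val_one, C_neg, C_1]
  ring

theorem isUnitTrinomial (hn : 2 ≤ n) : (reciprocalTrinomial n).IsUnitTrinomial :=
  ⟨0, n - 1, n, by omega, by omega, -1, -1, 1, eq_trinomial⟩

theorem monic (hn : 2 ≤ n) : (reciprocalTrinomial n).Monic := by
  rw [eq_trinomial]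
  exact trinomial_monic (by omega) (by omega)

theorem natDegree (hn : 2 ≤ n) : (reciprocalTrinomial n).natDegree = n := by
  rw [eq_trinomial]
  exact trinomial_natDegree (by omega) (by omega) one_ne_zero

theorem mirror (hn : 2 ≤ n) : (reciprocalTrinomial n).mirror = 1 - X - X ^ n := by
  rw [eq_trinomial, trinomial_mirror (by omega) (by omega) (by simp) (by simp),
    show n - (n - 1) + 0 = 1 by omega]
  simp only [trinomial_def, Units.val_neg, Units.val_one, C_neg, C_1]
  ring

theorem cyclotomic_six_eq (hn : 2 ≤ n) :
    cyclotomic 6 ℤ = (1 - X) * (reciprocalTrinomial n).mirror - X * reciprocalTrinomial n := by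
  obtain ⟨m, rfl⟩ := Nat.exists_eq_add_of_le' hn
  rw [mirror hn, cyclotomic_six, reciprocalTrinomial, show m + 2 - 1 = m + 1 by omega]
  ring

theorem dvd_cyclotomic_six (hn : 2 ≤ n) {w : ℤ[X]} (hw : w ∣ reciprocalTrinomial n)
    (hmw : Associated w.mirror w) : w ∣ cyclotomic 6 ℤ := by
  rw [cyclotomic_six_eq hn]
  exact dvd_sub (dvd_mul_of_dvd_right (dvd_mirror_of_dvd hw hmw) _) (dvd_mul_of_dvd_right hw _)

theorem cyclotomic_six_dvd (h : n % 6 = 5) : cyclotomic 6 ℤ ∣ reciprocalTrinomial n := by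
  obtain ⟨m, rfl⟩ : ∃ m, n = 6 * m + 5 := ⟨n / 6, by omega⟩
  have hf : reciprocalTrinomial (6 * m + 5)
      = (X ^ 6) ^ m * (cyclotomic 6 ℤ * (X ^ 3 - X - 1)) + ((X ^ 6) ^ m - 1) := by
    rw [reciprocalTrinomial, cyclotomic_six, show 6 * m + 5 - 1 = 6 * m + 4 by omega]
    ring
  rw [hf]
  refine dvd_add (dvd_mul_of_dvd_right (dvd_mul_right _ _) _) ?_
  simpa [one_pow] using (cyclotomic.dvd_X_pow_sub_one 6 ℤ).trans (sub_dvd_pow_sub_pow (X ^ 6) 1 m)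

theorem mod_six_eq_five_of_common_root (hn : 2 ≤ n) {z : ℂ}
    (h : aeval z (reciprocalTrinomial n) = 0) (h' : aeval z (reciprocalTrinomial n).mirror = 0) :
    n % 6 = 5 := by
  have h6 : aeval z (cyclotomic 6 ℤ) = 0 := by
    rw [cyclotomic_six_eq hn, map_sub, map_mul, map_mul, h, h', mul_zero, mul_zero, sub_zero]
  have hz2 : z ^ 2 - z + 1 = 0 := by simpa [cyclotomic_six] using h6
  have hz : IsPrimitiveRoot z 6 := by
    rw [← isRoot_cyclotomic_iff, cyclotomic_six]
    simpa using hz2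
  have hzn : z ^ n = 1 - z := by
    rw [mirror hn] at h'
    simp only [map_sub, map_one, aeval_X, map_pow] at h'
    linear_combination -h'
  -- `z ^ 5 = 1 - z` as well, since `z` is a root of `X ^ 2 - X + 1`.
  have h5 : z ^ (n % 6) = z ^ 5 := by
    rw [← one_mul (z ^ (n % 6)), ← one_pow (n / 6), ← hz.pow_eq_one, ← pow_mul, ← pow_add,
      Nat.div_add_mod, hzn]
    linear_combination (-z ^ 3 - z ^ 2 + 1) * hz2
  exact hz.pow_inj (Nat.mod_lt _ (by norm_num)) (by norm_num) h5

theorem not_cyclotomic_six_sq_dvd (hn : 2 ≤ n) : ¬cyclotomic 6 ℤ ^ 2 ∣ reciprocalTrinomial n := by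
  intro h
  obtain ⟨m, rfl⟩ := Nat.exists_eq_add_of_le' hn
  obtain ⟨q, hq⟩ := pow_sub_one_dvd_derivative_of_pow_dvd h
  set z : ℂ := Complex.exp (2 * Real.pi * Complex.I / 6)
  have hz : IsPrimitiveRoot z 6 := Complex.isPrimitiveRoot_exp 6 (by norm_num)
  have hz2 : z ^ 2 - z + 1 = 0 := by
    simpa [cyclotomic_six] using (isRoot_cyclotomic_iff (R := ℂ)).mpr hz
  have hder : ((m : ℂ) + 1 + 1) * z ^ (m + 1) - (m + 1) * z ^ m = 0 := by
    simpa [reciprocalTrinomial, cyclotomic_six, hz2] using congrArg (aeval z) hq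
  have hlin : ((m : ℂ) + 2) * z - (m + 1) = 0 := by
    have : z ^ m * (((m : ℂ) + 2) * z - (m + 1)) = 0 := by linear_combination hder
    exact (mul_eq_zero.mp this).resolve_left (pow_ne_zero _ (hz.ne_zero (by norm_num)))
  have hm : ((m ^ 2 + 3 * m + 3 : ℕ) : ℂ) = 0 := by
    push_cast
    linear_combination ((m : ℂ) + 2) ^ 2 * hz2 - (((m : ℂ) + 2) * z - 1) * hlin
  exact absurd (Nat.cast_eq_zero.mp hm) (by omega)

theorem irreducible_of_mod_six_ne_five (hn : 2 ≤ n) (h : n % 6 ≠ 5) :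
    Irreducible (reciprocalTrinomial n) :=
  (isUnitTrinomial hn).irreducible_of_coprime' fun _ ⟨hz, hz'⟩ ↦
    h (mod_six_eq_five_of_common_root hn hz hz')

theorem natDegree_eq_of_eq_cyclotomic_six_mul (hn : 2 ≤ n) {G : ℤ[X]}
    (hG : reciprocalTrinomial n = cyclotomic 6 ℤ * G) : G.natDegree = n - 2 := by
  have hdeg := congrArg Polynomial.natDegree hG
  rw [natDegree hn, natDegree_mul (cyclotomic_ne_zero 6 ℤ)
    (right_ne_zero_of_mul (hG ▸ (monic hn).ne_zero)), natDegree_cyclotomic,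
    show Nat.totient 6 = 2 by decide] at hdeg
  omega

theorem irreducible_of_eq_cyclotomic_six_mul (hn : 3 ≤ n) {G : ℤ[X]}
    (hG : reciprocalTrinomial n = cyclotomic 6 ℤ * G) : Irreducible G := by
  have hn2 : 2 ≤ n := by omega
  have hΦ : cyclotomic 6 ℤ ≠ 0 := cyclotomic_ne_zero 6 ℤ
  have hdeg := natDegree_eq_of_eq_cyclotomic_six_mul hn2 hG
  refine irreducible_iff.mpr ⟨fun hu ↦ by rw [natDegree_eq_zero_of_isUnit hu] at hdeg; omega,
    fun A B hAB ↦ ?_⟩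
  by_contra! ⟨hA, hB⟩
  rw [hAB, ← mul_assoc] at hG
  rcases (isUnitTrinomial hn2).associated_mirror_of_eq_mul hG with hmA | hmB
  · have hdvd := dvd_cyclotomic_six hn2 (hG ▸ dvd_mul_right _ _) hmA
    rw [← mul_one (cyclotomic 6 ℤ), mul_assoc, one_mul, mul_dvd_mul_iff_left hΦ] at hdvd
    exact hA (isUnit_of_dvd_one hdvd)
  · have hdvd := dvd_cyclotomic_six hn2 (hG ▸ dvd_mul_left _ _) hmB
    obtain hu | ⟨u, hu⟩ := (cyclotomic.irreducible (by norm_num)).dvd_iff.mp hdvd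
    · exact hB hu
    · exact not_cyclotomic_six_sq_dvd hn2 ⟨A * u, by rw [hG, ← hu]; ring⟩

theorem aeval_inv_eq_zero {K : Type*} [Field K] (hn : 1 ≤ n) {θ : K} (hθ : θ ≠ 0)
    (h : -1 + θ + θ ^ n = 0) : aeval θ⁻¹ (reciprocalTrinomial n) = 0 := by
  obtain ⟨m, rfl⟩ := Nat.exists_eq_add_of_le' hn
  simp only [reciprocalTrinomial, map_sub, map_pow, aeval_X, map_one, add_tsub_cancel_right,
    inv_pow]
  field_simp
  linear_combination -θ ^ m * h

theorem natDegree_minpoly_of_mod_six_ne_five {K : Type*} [Field K] [Algebra ℚ K] (hn : 2 ≤ n)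
    (h : n % 6 ≠ 5) {β : K} (hβ : aeval β (reciprocalTrinomial n) = 0) :
    (minpoly ℚ β).natDegree = n :=
  (natDegree_minpoly_rat_of_irreducible (monic hn) (irreducible_of_mod_six_ne_five hn h) hβ).trans
    (natDegree hn)

theorem natDegree_minpoly_of_mod_six_eq_five (h : n % 6 = 5) {β : ℝ}
    (hβ : aeval β (reciprocalTrinomial n) = 0) : (minpoly ℚ β).natDegree = n - 2 := by
  have hn : 3 ≤ n := by omega
  obtain ⟨G, hG⟩ := cyclotomic_six_dvd h
  have hGmonic : G.Monic := (cyclotomic.monic 6 ℤ).of_mul_monic_left (hG ▸ monic (by omega))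
  -- `X ^ 2 - X + 1` has no real root.
  have hβG : aeval β G = 0 := by
    rw [hG, map_mul, cyclotomic_six] at hβ
    refine (mul_eq_zero.mp hβ).resolve_left (ne_of_gt ?_)
    simp only [map_add, map_sub, map_pow, aeval_X, map_one]
    nlinarith [sq_nonneg (2 * β - 1)]
  rw [natDegree_minpoly_rat_of_irreducible hGmonic (irreducible_of_eq_cyclotomic_six_mul hn hG) hβG]
  exact natDegree_eq_of_eq_cyclotomic_six_mul (by omega) hG

end reciprocalTrinomial

theorem lt_of_add_pow_eq_one {α : Type*} [CommRing α] [LinearOrder α] [IsStrictOrderedRing α]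
    {a b : α} {m : ℕ} (hb0 : 0 < b) (hb1 : b < 1) (ha : a + a ^ m = 1)
    (hb : b + b ^ (m + 1) = 1) : a < b := by
  by_contra! hba
  have : b ^ (m + 1) < a ^ m :=
    (pow_lt_pow_right_of_lt_one₀ hb0 hb1 m.lt_succ_self).trans_le (pow_le_pow_left₀ hb0.le hba m)
  linarith

theorem Real.inv_eq_goldenRatio {x : ℝ} (hx : 0 < x) (h : -1 + x + x ^ 2 = 0) :
    x⁻¹ = Real.goldenRatio := by
  have hy : x⁻¹ ^ 2 - x⁻¹ - 1 = 0 := by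
    field_simp
    linear_combination -h
  have hφψ : (x⁻¹ - Real.goldenRatio) * (x⁻¹ - Real.goldenConj) = 0 := by
    linear_combination hy - x⁻¹ * Real.goldenRatio_add_goldenConj + Real.goldenRatio_mul_goldenConj
  refine sub_eq_zero.mp ((mul_eq_zero.mp hφψ).resolve_right (ne_of_gt ?_))
  linarith [inv_pos.mpr hx, Real.goldenConj_neg]

/-- For every integer `n ≥ 2`, the dynamical degree of the Perron number
`θ_n⁻¹` equals `n`; moreover the degree of `θ_n⁻¹` over `ℚ` equals `n` when
`n ≢ 5 (mod 6)` and equals `n - 2` when `n ≡ 5 (mod 6)`.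
Here `θ n` is the unique root of `-1 + X + X^n` in `(0,1)`, and `dyg` is the dynamical
degree function: `dyg β = n` for the unique `n ≥ 3` with `θ_n⁻¹ ≤ β < θ_{n-1}⁻¹`,
with the convention `dyg ((1+√5)/2) = 2`. -/
theorem dyg_theta_inv_eq_and_degree
    (θ : ℕ → ℝ)
    (hθ : ∀ n : ℕ, 2 ≤ n → θ n ∈ Set.Ioo (0 : ℝ) 1 ∧ -1 + θ n + θ n ^ n = 0)
    (dyg : ℝ → ℕ)
    (hdyg : ∀ (β : ℝ) (n : ℕ), 3 ≤ n → (θ n)⁻¹ ≤ β → β < (θ (n - 1))⁻¹ → dyg β = n)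
    (hdyg2 : dyg ((1 + Real.sqrt 5) / 2) = 2) :
    ∀ n : ℕ, 2 ≤ n →
      dyg ((θ n)⁻¹) = n ∧
      (¬ n % 6 = 5 → (minpoly ℚ ((θ n)⁻¹)).natDegree = n) ∧
      (n % 6 = 5 → (minpoly ℚ ((θ n)⁻¹)).natDegree = n - 2) := by
  intro n hn
  obtain ⟨⟨hθ0, hθ1⟩, hθn⟩ := hθ n hn
  have hroot := reciprocalTrinomial.aeval_inv_eq_zero (by omega) hθ0.ne' hθn
  refine ⟨?_, fun h ↦ reciprocalTrinomial.natDegree_minpoly_of_mod_six_ne_five hn h hroot,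
    fun h ↦ reciprocalTrinomial.natDegree_minpoly_of_mod_six_eq_five h hroot⟩
  obtain rfl | hn3 := hn.eq_or_lt
  · rw [Real.inv_eq_goldenRatio hθ0 hθn]
    exact hdyg2
  · obtain ⟨⟨hθ0', -⟩, hθn'⟩ := hθ (n - 1) (by omega)
    have hθlt : θ (n - 1) < θ n :=
      lt_of_add_pow_eq_one (m := n - 1) hθ0 hθ1 (by linear_combination hθn')
        (by rw [Nat.sub_add_cancel (by omega)]; linear_combination hθn)
    exact hdyg _ n hn3 le_rfl (inv_strictAnti₀ hθ0' hθlt)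
end

section
/- There exists β_0 with 1 < β_0 < θ_6^{-1} such that for every real number β with 1 < β < β_0, the dynamical degree n = dyg(β) satisfies | n·(β − 1)/(−log(β − 1)) − 1 | ≤ ( log(−log(β − 1)) / log(β − 1) )²; in other words, dyg(β) = (−log(β − 1)/(β − 1))·[1 + O(( log(−log(β − 1)) / log(β − 1) )²)] as β → 1⁺, with constant 1 in the Big O. -/
/-!
Write `ε = β - 1`. Since `-1 + X + X ^ n` is increasing on `[0, ∞)` and takes the value
`(1 - ε β ^ (n - 1)) / β ^ n` at `β⁻¹`, we have `θ_n⁻¹ ≤ β ↔ 1 ≤ ε β ^ (n - 1)`; hence `dyg β` is the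
`n` with `ε β ^ (n - 2) < 1 ≤ ε β ^ (n - 1)`. Taking logarithms and using `ε / β ≤ log β ≤ ε`
gives `t + ε ≤ n ε ≤ t + ε (t + 2)` for `t = -log ε`, and the error `ε (t + 2) / t` is at most
`(log t / t) ^ 2` because `e ^ (-t) t (t + 2) ≤ 1 ≤ (log t) ^ 2` once `t ≥ 8`.
-/

open Real

lemma le_root_iff_pow_le_one_sub {θ x : ℝ} {n : ℕ} (hθ : 0 ≤ θ) (hroot : -1 + θ + θ ^ n = 0)
    (hx : 0 ≤ x) : x ≤ θ ↔ x ^ n ≤ 1 - x := by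
  have hmono : StrictMonoOn (fun y : ℝ => -1 + y + y ^ n) (Set.Ici 0) := fun a ha b _ hab => by
    dsimp only
    linarith [pow_le_pow_left₀ ha hab.le n]
  rw [← hmono.le_iff_le hx hθ]
  simp only [hroot]
  constructor <;> intro h <;> linarith

lemma inv_le_iff_one_le_sub_one_mul_pow {θ β : ℝ} {n : ℕ} (hθ : 0 < θ)
    (hroot : -1 + θ + θ ^ (n + 1) = 0) (hβ : 0 < β) : θ⁻¹ ≤ β ↔ 1 ≤ (β - 1) * β ^ n := by
  have hpow : 0 < β ^ (n + 1) := pow_pos hβ _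
  have hsub : 1 - β⁻¹ = (β - 1) * β ^ n / β ^ (n + 1) := by
    field_simp
    ring
  rw [inv_le_comm₀ hθ hβ, le_root_iff_pow_le_one_sub hθ.le hroot (inv_nonneg.2 hβ.le), hsub,
    inv_pow, ← one_div, div_le_div_iff_of_pos_right hpow]

lemma exists_mul_pow_lt_one_le {c β : ℝ} (hc : 0 < c) (hβ : 1 < β) (hcβ : c * β < 1) :
    ∃ k, 1 ≤ k ∧ c * β ^ k < 1 ∧ 1 ≤ c * β ^ (k + 1) := by
  have hunbounded : ∃ j, 1 ≤ c * β ^ (j + 1) := by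
    obtain ⟨j, hj⟩ := pow_unbounded_of_one_lt c⁻¹ hβ
    refine ⟨j, ?_⟩
    calc 1 ≤ c * β ^ j := by rw [inv_lt_iff_one_lt_mul₀ hc] at hj; linarith
      _ ≤ c * β ^ (j + 1) := by gcongr; exacts [hβ.le, j.le_succ]
  obtain ⟨j, hlt, hle⟩ :=
    Nat.exists_not_and_succ_of_not_zero_of_exists (by simpa using hcβ) hunbounded
  exact ⟨j + 1, j.succ_pos, not_le.1 hlt, hle⟩

lemma dyg_eq_add_two {θ : ℕ → ℝ}
    (hθ : ∀ n : ℕ, 2 ≤ n → θ n ∈ Set.Ioo (0 : ℝ) 1 ∧ -1 + θ n + θ n ^ n = 0) {dyg : ℝ → ℕ}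
    (hdyg : ∀ (β : ℝ) (n : ℕ), 3 ≤ n → (θ n)⁻¹ ≤ β → β < (θ (n - 1))⁻¹ → dyg β = n)
    {β : ℝ} {k : ℕ} (hβ : 0 < β) (hk : 1 ≤ k) (hlt : (β - 1) * β ^ k < 1)
    (hle : 1 ≤ (β - 1) * β ^ (k + 1)) : dyg β = k + 2 := by
  have hroot_le (n : ℕ) (hn : 1 ≤ n) : (θ (n + 1))⁻¹ ≤ β ↔ 1 ≤ (β - 1) * β ^ n := by
    obtain ⟨⟨hθ₀, -⟩, hroot⟩ := hθ (n + 1) (by omega)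
    exact inv_le_iff_one_le_sub_one_mul_pow hθ₀ hroot hβ
  refine hdyg β (k + 2) (by omega) ((hroot_le (k + 1) (by omega)).2 hle) ?_
  exact not_le.1 (mt (hroot_le k hk).1 (not_le.2 hlt))

lemma neg_log_add_le_mul_sub_one_le {β : ℝ} {k : ℕ} (hβ : 1 < β)
    (hlt : (β - 1) * β ^ k < 1) (hle : 1 ≤ (β - 1) * β ^ (k + 1)) :
    -log (β - 1) + (β - 1) ≤ (k + 2) * (β - 1) ∧
      (k + 2) * (β - 1) ≤ -log (β - 1) + (β - 1) * (-log (β - 1) + 2) := by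
  have hε : 0 < β - 1 := sub_pos.2 hβ
  have hβ₀ : 0 < β := by linarith
  have hlog_pow (j : ℕ) : log ((β - 1) * β ^ j) = log (β - 1) + j * log β := by
    rw [log_mul hε.ne' (pow_pos hβ₀ j).ne', log_pow]
  have hk : log (β - 1) + k * log β < 0 := by
    rw [← hlog_pow]; exact log_neg (by positivity) hlt
  have hk1 : 0 ≤ log (β - 1) + (k + 1 : ℕ) * log β := by
    rw [← hlog_pow]; exact log_nonneg hle
  push_cast at hk1
  have hlog_le : log β ≤ β - 1 := log_le_sub_one_of_pos hβ₀
  have hle_log : β - 1 ≤ β * log β :=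
    calc β - 1 = β * (1 - β⁻¹) := by field_simp
      _ ≤ β * log β := by gcongr; exact one_sub_inv_le_log_of_pos hβ₀
  have hk₀ : (0 : ℝ) ≤ k := k.cast_nonneg
  constructor
  · have : (k + 1) * log β ≤ (k + 1) * (β - 1) := by gcongr
    linarith
  · have h₁ : k * (β - 1) ≤ k * (β * log β) := by gcongr
    have h₂ : k * log β * β ≤ -log (β - 1) * β := by gcongr; linarith
    linarith

lemma mul_add_two_le_exp {t : ℝ} (ht : 8 ≤ t) : t * (t + 2) ≤ exp t := by
  have hcubic : t ^ 3 / Nat.factorial 3 ≤ exp t := pow_div_factorial_le_exp t (by linarith) 3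
  norm_num [Nat.factorial] at hcubic
  nlinarith [mul_nonneg (mul_nonneg (sub_nonneg.2 ht) (by linarith : (0 : ℝ) ≤ t + 2))
    (by linarith : (0 : ℝ) ≤ t)]

lemma exp_neg_mul_mul_add_two_le_sq_log {t : ℝ} (ht : 8 ≤ t) :
    exp (-t) * (t * (t + 2)) ≤ log t ^ 2 := by
  have hone : exp (-t) * (t * (t + 2)) ≤ 1 := by
    rw [exp_neg, inv_mul_le_one₀ (exp_pos t)]
    exact mul_add_two_le_exp ht
  have hlog : 1 ≤ log t := by
    rw [le_log_iff_exp_le (by linarith)]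
    linarith [exp_one_lt_three]
  nlinarith

lemma abs_mul_div_neg_log_sub_one_le {β : ℝ} {k : ℕ} (hβ : 1 < β) (hβ₈ : β - 1 ≤ exp (-8))
    (hlt : (β - 1) * β ^ k < 1) (hle : 1 ≤ (β - 1) * β ^ (k + 1)) :
    |(k + 2) * (β - 1) / -log (β - 1) - 1| ≤ (log (-log (β - 1)) / log (β - 1)) ^ 2 := by
  have hε : 0 < β - 1 := sub_pos.2 hβ
  obtain ⟨hlower, hupper⟩ := neg_log_add_le_mul_sub_one_le hβ hlt hle
  set ε := β - 1
  set t := -log ε with ht_def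
  have ht : 8 ≤ t := by
    rw [ht_def, le_neg, ← log_exp (-8)]
    exact log_le_log hε hβ₈
  have ht₀ : 0 < t := by linarith
  have hε_exp : ε = exp (-t) := by rw [ht_def, neg_neg, exp_log hε]
  have herror : |(k + 2) * ε / t - 1| ≤ ε * (t + 2) / t := by
    rw [div_sub_one ht₀.ne', abs_div, abs_of_pos ht₀]
    gcongr
    rw [abs_le]
    constructor <;> nlinarith
  calc |(k + 2) * ε / t - 1| ≤ ε * (t + 2) / t := herror
    _ ≤ log t ^ 2 / t ^ 2 := by
      rw [div_le_div_iff₀ ht₀ (by positivity), hε_exp]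
      nlinarith [exp_neg_mul_mul_add_two_le_sq_log ht]
    _ = (log t / log ε) ^ 2 := by rw [div_pow, ht_def, neg_sq]

theorem dyg_asymptotic_expansion_general
    (θ : ℕ → ℝ)
    (hθ : ∀ n : ℕ, 2 ≤ n → θ n ∈ Set.Ioo (0 : ℝ) 1 ∧ -1 + θ n + θ n ^ n = 0)
    (dyg : ℝ → ℕ)
    (hdyg : ∀ (β : ℝ) (n : ℕ), 3 ≤ n → (θ n)⁻¹ ≤ β → β < (θ (n - 1))⁻¹ → dyg β = n) :
    ∃ β₀ : ℝ, 1 < β₀ ∧ β₀ < (θ 6)⁻¹ ∧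
      ∀ β : ℝ, 1 < β → β < β₀ →
        |(dyg β : ℝ) * (β - 1) / (-Real.log (β - 1)) - 1| ≤
          (Real.log (-Real.log (β - 1)) / Real.log (β - 1)) ^ 2 := by
  have hexp : exp (-8) ≤ 1 / 9 := by
    rw [exp_neg, inv_le_comm₀ (exp_pos 8) (by norm_num)]
    linarith [add_one_le_exp 8]
  have hexp₀ := exp_pos (-8)
  refine ⟨1 + exp (-8), by linarith, ?_, fun β hβ hβ₀ => ?_⟩
  · obtain ⟨⟨hθ₀, -⟩, hroot⟩ := hθ 6 (by norm_num)
    rw [← not_le, inv_le_iff_one_le_sub_one_mul_pow hθ₀ hroot (by linarith), add_sub_cancel_left]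
    have : exp (-8) * (1 + exp (-8)) ^ 5 ≤ 1 / 9 * (1 + 1 / 9) ^ 5 := by gcongr
    norm_num at this
    linarith
  · have hsmall : (β - 1) * β < 1 := by nlinarith
    obtain ⟨k, hk, hlt, hle⟩ := exists_mul_pow_lt_one_le (sub_pos.2 hβ) hβ hsmall
    rw [dyg_eq_add_two hθ hdyg (by linarith) hk hlt hle]
    push_cast
    exact abs_mul_div_neg_log_sub_one_le hβ (by linarith) hlt hle

/-- There exists `β₀` with `1 < β₀ < θ_6⁻¹` such that for every real `β`
with `1 < β < β₀`, the dynamical degree `n = dyg β` satisfies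
`| n·(β−1)/(−log(β−1)) − 1 | ≤ ( log(−log(β−1)) / log(β−1) )²`;
i.e. `dyg β = (−log(β−1)/(β−1))·(1 + O((log(−log(β−1))/log(β−1))²))` as `β → 1⁺`,
with constant `1` in the Big O. -/
theorem dyg_asymptotic_expansion
    (θ : ℕ → ℝ)
    (hθ : ∀ n : ℕ, 2 ≤ n → θ n ∈ Set.Ioo (0 : ℝ) 1 ∧ -1 + θ n + θ n ^ n = 0)
    (dyg : ℝ → ℕ)
    (hdyg : ∀ (β : ℝ) (n : ℕ), 3 ≤ n → (θ n)⁻¹ ≤ β → β < (θ (n - 1))⁻¹ → dyg β = n)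
    (hdyg2 : dyg ((1 + Real.sqrt 5) / 2) = 2) :
    ∃ β₀ : ℝ, 1 < β₀ ∧ β₀ < (θ 6)⁻¹ ∧
      ∀ β : ℝ, 1 < β → β < β₀ →
        |(dyg β : ℝ) * (β - 1) / (-Real.log (β - 1)) - 1| ≤
          (Real.log (-Real.log (β - 1)) / Real.log (β - 1)) ^ 2 :=
  dyg_asymptotic_expansion_general θ hθ dyg hdyg
end

section
/- Let n ≥ 2 and let β be a real number with 1 < β ≤ (1+√5)/2, with digits (t_i)_{i≥1} of the Rényi β-expansion of 1. Then θ_{n+1}^{-1} ≤ β < θ_n^{-1} if and only if: t_1 = 1; t_i = 0 for 2 ≤ i ≤ n; t_{n+1} = 1; t_i ∈ {0,1} for every i; and whenever i < j are indices with n + 1 ≤ i, t_i = t_j = 1 and t_k = 0 for all i < k < j, one has j − i ≥ n. -/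
/-!
Since `θ_n` is a root of `−1 + X + Xⁿ`, its inverse is the unique root in `[1, ∞)` of
`x^{n−1}(x − 1) = 1`, and `x ↦ x^m (x − 1)` is strictly increasing there; so
`θ_{n+1}⁻¹ ≤ β < θ_n⁻¹` means `β^{n−1}(β − 1) < 1 ≤ βⁿ(β − 1)`. For `1 < β < 2` the orbit of `1`
starts with `T_β(1) = β − 1`, and a point `x` with `β^k x < 1` is multiplied by `β` during the
next `k` steps, producing the digit `0` each time. Starting from `β − 1`, this gives the `n − 1`
zeros after `t_1 = 1` and then `t_{n+1} = ⌊βⁿ(β − 1)⌋`, which is `1` exactly at the upper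
inequality. After any digit `1` the orbit point is at most `β − 1`, whence the gaps of length
at least `n`.
-/

/-- The β-transformation `T_β : [0,1] → [0,1]`, `T_β(x) = βx − ⌊βx⌋`. -/
noncomputable def betaT (β : ℝ) (x : ℝ) : ℝ := Int.fract (β * x)

/-- The digits of the Rényi β-expansion of `1`: for `i ≥ 1`,
`t_i = ⌊β·T_β^{i−1}(1)⌋` (so `t_1 = ⌊β⌋`). -/
noncomputable def renyiDigit (β : ℝ) (i : ℕ) : ℤ := ⌊β * (betaT β)^[i - 1] 1⌋

open Function

section Orbit

variable {β : ℝ}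

lemma betaT_iterate_nonneg (β : ℝ) (i : ℕ) : 0 ≤ (betaT β)^[i] 1 := by
  cases i with
  | zero => exact zero_le_one
  | succ k => rw [iterate_succ_apply']; exact Int.fract_nonneg _

lemma betaT_iterate_le_one (β : ℝ) (i : ℕ) : (betaT β)^[i] 1 ≤ 1 := by
  cases i with
  | zero => exact le_rfl
  | succ k => rw [iterate_succ_apply']; exact (Int.fract_lt_one _).le

lemma betaT_iterate_lt_one (β : ℝ) {i : ℕ} (hi : i ≠ 0) : (betaT β)^[i] 1 < 1 := by
  obtain ⟨k, rfl⟩ := Nat.exists_eq_succ_of_ne_zero hi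
  rw [iterate_succ_apply']
  exact Int.fract_lt_one _

lemma renyiDigit_succ (β : ℝ) (k : ℕ) : renyiDigit β (k + 1) = ⌊β * (betaT β)^[k] 1⌋ := rfl

lemma betaT_iterate_succ (β : ℝ) (k : ℕ) :
    (betaT β)^[k + 1] 1 = β * (betaT β)^[k] 1 - renyiDigit β (k + 1) := by
  rw [iterate_succ_apply', renyiDigit_succ]
  rfl

lemma renyiDigit_eq_zero_or_one (hβ0 : 0 ≤ β) (hβ2 : β < 2) {i : ℕ} (hi : 1 ≤ i) :
    renyiDigit β i = 0 ∨ renyiDigit β i = 1 := by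
  obtain ⟨k, rfl⟩ := Nat.exists_eq_add_of_le' hi
  have hx0 := betaT_iterate_nonneg β k
  have hx1 := betaT_iterate_le_one β k
  have h0 : 0 ≤ ⌊β * (betaT β)^[k] 1⌋ := Int.floor_nonneg.mpr (by positivity)
  have h2 : ⌊β * (betaT β)^[k] 1⌋ < 2 := Int.floor_lt.mpr (by push_cast; nlinarith)
  rw [renyiDigit_succ]
  omega

lemma betaT_iterate_add_of_renyiDigit_eq_zero {i k : ℕ}
    (h : ∀ j, 1 ≤ j → j ≤ k → renyiDigit β (i + j) = 0) :
    (betaT β)^[i + k] 1 = β ^ k * (betaT β)^[i] 1 := by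
  induction k with
  | zero => simp
  | succ k ih =>
    rw [← add_assoc, betaT_iterate_succ, add_assoc, h (k + 1) le_add_self le_rfl,
      ih fun j hj hjk => h j hj (hjk.trans k.le_succ)]
    push_cast
    ring

lemma renyiDigit_add_eq_zero (hβ : 1 ≤ β) {i k : ℕ} (h : β ^ k * (betaT β)^[i] 1 < 1) :
    ∀ j, 1 ≤ j → j ≤ k → renyiDigit β (i + j) = 0 := by
  induction k with
  | zero => intro j hj hj0; omega
  | succ k ih =>
    have hx := betaT_iterate_nonneg β i
    have ih := ih <| lt_of_le_of_lt
      (mul_le_mul_of_nonneg_right (pow_le_pow_right₀ hβ k.le_succ) hx) h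
    intro j hj hjk
    rcases hjk.lt_or_eq with hjk | rfl
    · exact ih j hj (Nat.le_of_lt_succ hjk)
    · rw [← add_assoc, renyiDigit_succ, betaT_iterate_add_of_renyiDigit_eq_zero ih,
        Int.floor_eq_zero_iff]
      exact ⟨by positivity, by rwa [← mul_assoc, ← pow_succ']⟩

lemma betaT_iterate_le_sub_one_of_renyiDigit_eq_one (hβ : 0 ≤ β) {i : ℕ} (hi : 1 ≤ i)
    (h : renyiDigit β i = 1) : (betaT β)^[i] 1 ≤ β - 1 := by
  obtain ⟨k, rfl⟩ := Nat.exists_eq_add_of_le' hi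
  rw [betaT_iterate_succ, h]
  have := betaT_iterate_le_one β k
  push_cast
  nlinarith

lemma renyiDigit_add_eq_zero_of_renyiDigit_eq_one (hβ : 1 ≤ β) {m : ℕ}
    (hm : β ^ m * (β - 1) < 1) (i : ℕ) (hi : 1 ≤ i) (h : renyiDigit β i = 1) :
    ∀ j, 1 ≤ j → j ≤ m → renyiDigit β (i + j) = 0 :=
  renyiDigit_add_eq_zero hβ <| lt_of_le_of_lt
    (by gcongr; exact betaT_iterate_le_sub_one_of_renyiDigit_eq_one (by linarith) hi h) hm

end Orbit

section BetweenOneAndTwo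

variable {β : ℝ} (hβ1 : 1 < β) (hβ2 : β < 2)
include hβ1 hβ2

lemma renyiDigit_one : renyiDigit β 1 = 1 := by
  rw [renyiDigit_succ, iterate_zero_apply, mul_one, Int.floor_eq_iff]
  push_cast
  constructor <;> linarith

lemma betaT_iterate_one : (betaT β)^[1] 1 = β - 1 := by
  rw [betaT_iterate_succ, renyiDigit_one hβ1 hβ2]
  simp

lemma betaT_iterate_succ_of_renyiDigit_eq_zero {m : ℕ}
    (h : ∀ i, 2 ≤ i → i ≤ m + 1 → renyiDigit β i = 0) :
    (betaT β)^[m + 1] 1 = β ^ m * (β - 1) := by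
  rw [add_comm, betaT_iterate_add_of_renyiDigit_eq_zero fun j hj hjm => h _ (by omega) (by omega),
    betaT_iterate_one hβ1 hβ2]

lemma renyiDigits_of_pow_mul_sub_one {m : ℕ} (hlo : β ^ m * (β - 1) < 1)
    (hhi : 1 ≤ β ^ (m + 1) * (β - 1)) :
    renyiDigit β 1 = 1 ∧
      (∀ i : ℕ, 2 ≤ i → i ≤ m + 1 → renyiDigit β i = 0) ∧
      renyiDigit β (m + 1 + 1) = 1 ∧
      (∀ i : ℕ, 1 ≤ i → renyiDigit β i = 0 ∨ renyiDigit β i = 1) ∧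
      (∀ i j : ℕ, m + 1 + 1 ≤ i → i < j → renyiDigit β i = 1 → renyiDigit β j = 1 →
        (∀ k : ℕ, i < k → k < j → renyiDigit β k = 0) → m + 1 ≤ j - i) := by
  have gap := renyiDigit_add_eq_zero_of_renyiDigit_eq_one hβ1.le hlo
  have zeros : ∀ i, 2 ≤ i → i ≤ m + 1 → renyiDigit β i = 0 := fun i hi him => by
    simpa [show 1 + (i - 1) = i by omega] using
      gap 1 le_rfl (renyiDigit_one hβ1 hβ2) (i - 1) (by omega) (by omega)
  refine ⟨renyiDigit_one hβ1 hβ2, zeros, ?_, fun i => renyiDigit_eq_zero_or_one (by linarith) hβ2,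
    fun i j hi hij hti htj _ => ?_⟩
  · have hupper : β ^ (m + 1) * (β - 1) < 2 := by
      rw [pow_succ', mul_assoc]
      nlinarith
    rw [renyiDigit_succ, betaT_iterate_succ_of_renyiDigit_eq_zero hβ1 hβ2 zeros, ← mul_assoc,
      ← pow_succ', Int.floor_eq_iff]
    push_cast
    exact ⟨hhi, by linarith⟩
  · by_contra! hshort
    have := gap i (by omega) hti (j - i) (by omega) (by omega)
    rw [Nat.add_sub_cancel' hij.le, htj] at this
    exact one_ne_zero this

lemma pow_mul_sub_one_of_renyiDigits {m : ℕ}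
    (hzeros : ∀ i : ℕ, 2 ≤ i → i ≤ m + 1 → renyiDigit β i = 0)
    (hone : renyiDigit β (m + 1 + 1) = 1) :
    β ^ m * (β - 1) < 1 ∧ 1 ≤ β ^ (m + 1) * (β - 1) := by
  have hx := betaT_iterate_succ_of_renyiDigit_eq_zero hβ1 hβ2 hzeros
  refine ⟨hx ▸ betaT_iterate_lt_one β m.succ_ne_zero, ?_⟩
  rw [renyiDigit_succ, hx, ← mul_assoc, ← pow_succ', Int.floor_eq_iff] at hone
  exact_mod_cast hone.1

theorem renyiDigits_iff_pow_mul_sub_one (m : ℕ) :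
    (renyiDigit β 1 = 1 ∧
      (∀ i : ℕ, 2 ≤ i → i ≤ m + 1 → renyiDigit β i = 0) ∧
      renyiDigit β (m + 1 + 1) = 1 ∧
      (∀ i : ℕ, 1 ≤ i → renyiDigit β i = 0 ∨ renyiDigit β i = 1) ∧
      (∀ i j : ℕ, m + 1 + 1 ≤ i → i < j → renyiDigit β i = 1 → renyiDigit β j = 1 →
        (∀ k : ℕ, i < k → k < j → renyiDigit β k = 0) → m + 1 ≤ j - i)) ↔
      (β ^ m * (β - 1) < 1 ∧ 1 ≤ β ^ (m + 1) * (β - 1)) :=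
  ⟨fun ⟨_, hzeros, hone, _⟩ => pow_mul_sub_one_of_renyiDigits hβ1 hβ2 hzeros hone,
    fun ⟨hlo, hhi⟩ => renyiDigits_of_pow_mul_sub_one hβ1 hβ2 hlo hhi⟩

end BetweenOneAndTwo

lemma strictMonoOn_pow_mul_sub_one (m : ℕ) :
    StrictMonoOn (fun x : ℝ => x ^ m * (x - 1)) (Set.Ici 1) := by
  intro a ha b hb hab
  simp only [Set.mem_Ici] at ha hb
  have : a ^ m ≤ b ^ m := by gcongr
  have : 0 < a ^ m := by positivity
  nlinarith

lemma inv_pow_mul_inv_sub_one {s : ℝ} (hs : s ≠ 0) {m : ℕ} (h : -1 + s + s ^ (m + 1) = 0) :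
    s⁻¹ ^ m * (s⁻¹ - 1) = 1 := by
  rw [inv_pow, inv_mul_eq_div, div_eq_one_iff_eq (pow_ne_zero _ hs)]
  field_simp
  linear_combination -h

lemma lt_inv_iff_pow_mul_sub_one_lt_one {s β : ℝ} (hs : s ∈ Set.Ioo 0 1) {m : ℕ}
    (h : -1 + s + s ^ (m + 1) = 0) (hβ : 1 ≤ β) :
    β < s⁻¹ ↔ β ^ m * (β - 1) < 1 := by
  have hs_inv : 1 ≤ s⁻¹ := (one_le_inv₀ hs.1).mpr hs.2.le
  rw [← (strictMonoOn_pow_mul_sub_one m).lt_iff_lt hβ hs_inv,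
    inv_pow_mul_inv_sub_one hs.1.ne' h]

/-- let `n ≥ 2` and `β ∈ (1, (1+√5)/2]`, with digits `(t_i)` of the Rényi
β-expansion of `1`. Then `θ_{n+1}⁻¹ ≤ β < θ_n⁻¹` if and only if: `t_1 = 1`; `t_i = 0`
for `2 ≤ i ≤ n`; `t_{n+1} = 1`; every `t_i ∈ {0,1}`; and whenever `i < j` with
`n + 1 ≤ i`, `t_i = t_j = 1`, and `t_k = 0` for all `i < k < j`, one has `j − i ≥ n`. -/
theorem renyi_expansion_characterization
    (θ : ℕ → ℝ)
    (hθ : ∀ n : ℕ, 2 ≤ n → θ n ∈ Set.Ioo (0 : ℝ) 1 ∧ -1 + θ n + θ n ^ n = 0)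
    (n : ℕ) (hn : 2 ≤ n)
    (β : ℝ) (hβ1 : 1 < β) (hβ2 : β ≤ (1 + Real.sqrt 5) / 2) :
    ((θ (n + 1))⁻¹ ≤ β ∧ β < (θ n)⁻¹) ↔
      (renyiDigit β 1 = 1 ∧
       (∀ i : ℕ, 2 ≤ i → i ≤ n → renyiDigit β i = 0) ∧
       renyiDigit β (n + 1) = 1 ∧
       (∀ i : ℕ, 1 ≤ i → renyiDigit β i = 0 ∨ renyiDigit β i = 1) ∧
       (∀ i j : ℕ, n + 1 ≤ i → i < j → renyiDigit β i = 1 → renyiDigit β j = 1 →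
         (∀ k : ℕ, i < k → k < j → renyiDigit β k = 0) → n ≤ j - i)) := by
  obtain ⟨m, rfl⟩ : ∃ m, n = m + 1 := ⟨n - 1, by omega⟩
  obtain ⟨hs, hs_root⟩ := hθ (m + 1) hn
  obtain ⟨ht, ht_root⟩ := hθ (m + 1 + 1) (by omega)
  rw [renyiDigits_iff_pow_mul_sub_one hβ1 (hβ2.trans_lt Real.goldenRatio_lt_two), ← not_lt,
    lt_inv_iff_pow_mul_sub_one_lt_one ht ht_root hβ1.le,
    lt_inv_iff_pow_mul_sub_one_lt_one hs hs_root hβ1.le, not_lt, and_comm]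
end

section
/- Let β > 1 be a real number. For every complex z with |z| < 1, the series f_β(z) = −1 + Σ_{i≥1} t_i z^i and Σ_{n≥0} T_β^n(1) z^n converge absolutely and satisfy f_β(z) = −(1 − βz)·Σ_{n≥0} T_β^n(1) z^n. Moreover f_β(1/β) = 0, the derivative satisfies f_β′(1/β) > 0 (so 1/β is a simple zero of f_β), and f_β has no zero in the closed disk |z| ≤ 1/β other than z = 1/β. -/
/-- Coefficients of the Parry Upper function `f_β(z) = −1 + Σ_{i≥1} t_i z^i`:
coefficient `0` is `−1`, and for `i ≥ 1` the coefficient `t_i = ⌊β·T_β^{i−1}(1)⌋`. -/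
noncomputable def puCoeff (β : ℝ) : ℕ → ℤ
  | 0 => -1
  | (i + 1) => ⌊β * (betaT β)^[i] 1⌋

/-!
Writing `x_m = T_β^m(1) ∈ [0,1]`, the digits satisfy `t_{i+1} = β x_i − x_{i+1}`, so summing
against `z^{i+1}` telescopes to `f_β(z) = −(1 − βz) Σ x_m z^m`, which vanishes at `z = 1/β`.
All coefficients of `f_β` have modulus at most `β`, so `f_β` is a power series of radius at
least `1` that may be differentiated termwise; its derivative at `1/β` is at least `t_1 ≥ 1`
since `t_i ≥ 0` for `i ≥ 1`. Finally, if `|z| ≤ 1/β` then `Re (t_i z^i) ≤ t_i β^{-i}` termwise,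
with strict inequality for `i = 1` unless `z = 1/β`; so `f_β(z) = 0 = f_β(1/β)` forces
`z = 1/β`.
-/

section PowerSeries

theorem summable_norm_mul_pow_of_norm_le {𝕜 : Type*} [NormedDivisionRing 𝕜] {a : ℕ → 𝕜} {C : ℝ}
    (ha : ∀ n, ‖a n‖ ≤ C) {z : 𝕜} (hz : ‖z‖ < 1) : Summable fun n => ‖a n * z ^ n‖ := by
  refine .of_nonneg_of_le (fun _ => norm_nonneg _) (fun n => ?_)
    ((summable_geometric_of_lt_one (norm_nonneg z) hz).mul_left C)
  rw [norm_mul, norm_pow]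
  exact mul_le_mul_of_nonneg_right (ha n) (by positivity)

theorem summable_nat_mul_pow_pred {r : ℝ} (hr₀ : 0 ≤ r) (hr₁ : r < 1) :
    Summable fun n : ℕ => (n : ℝ) * r ^ (n - 1) := by
  rw [← summable_nat_add_iff 1]
  refine (summable_choose_mul_geometric_of_norm_lt_one 1
    (by rwa [Real.norm_of_nonneg hr₀])).congr fun n => ?_
  simp

variable {𝕜 : Type*} [RCLike 𝕜] {a : ℕ → 𝕜} {C : ℝ}

theorem norm_mul_nat_mul_pow_pred_le {n : ℕ} (ha : ‖a n‖ ≤ C) {y : 𝕜} {r : ℝ} (hy : ‖y‖ ≤ r) :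
    ‖a n * (n * y ^ (n - 1))‖ ≤ C * (n * r ^ (n - 1)) := by
  rw [norm_mul, norm_mul, norm_pow, RCLike.norm_natCast]
  gcongr
  exact (norm_nonneg _).trans ha

theorem summable_mul_nat_mul_pow_pred (ha : ∀ n, ‖a n‖ ≤ C) {x : 𝕜} (hx : ‖x‖ < 1) :
    Summable fun n : ℕ => a n * (n * x ^ (n - 1)) :=
  .of_norm_bounded ((summable_nat_mul_pow_pred (norm_nonneg x) hx).mul_left C)
    fun n => norm_mul_nat_mul_pow_pred_le (ha n) le_rfl

theorem hasDerivAt_tsum_mul_pow (ha : ∀ n, ‖a n‖ ≤ C) {x : 𝕜} (hx : ‖x‖ < 1) :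
    HasDerivAt (fun y => ∑' n, a n * y ^ n) (∑' n, a n * (n * x ^ (n - 1))) x := by
  obtain ⟨r, hxr, hr₁⟩ := exists_between hx
  have hx_mem : x ∈ Metric.ball (0 : 𝕜) r := mem_ball_zero_iff.2 hxr
  refine hasDerivAt_tsum_of_isPreconnected
    ((summable_nat_mul_pow_pred ((norm_nonneg x).trans hxr.le) hr₁).mul_left C) Metric.isOpen_ball
    (convex_ball 0 r).isPreconnected (fun n y _ => (hasDerivAt_pow n y).const_mul (a n))
    (fun n y hy => norm_mul_nat_mul_pow_pred_le (ha n) (mem_ball_zero_iff.1 hy).le)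
    hx_mem (.of_norm (summable_norm_mul_pow_of_norm_le ha hx)) hx_mem

end PowerSeries

theorem tsum_mul_nat_mul_pow_pred_pos {a : ℕ → ℝ} {C : ℝ} (ha : ∀ n, |a n| ≤ C)
    (ha₀ : ∀ n ≠ 0, 0 ≤ a n) (ha₁ : 0 < a 1) {x : ℝ} (hx₀ : 0 ≤ x) (hx₁ : x < 1) :
    0 < ∑' n, a n * (n * x ^ (n - 1)) := by
  refine (summable_mul_nat_mul_pow_pred (𝕜 := ℝ) ha (by rwa [Real.norm_of_nonneg hx₀])).tsum_pos
    (fun n => ?_) 1 (by simpa using ha₁)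
  rcases eq_or_ne n 0 with rfl | hn
  · simp
  · exact mul_nonneg (ha₀ n hn) (by positivity)

open scoped ComplexOrder in
theorem Complex.re_lt_of_norm_le_of_ne {z : ℂ} {r : ℝ} (hz : ‖z‖ ≤ r) (hne : z ≠ r) : z.re < r := by
  refine ((re_le_norm z).trans hz).lt_of_ne fun hre => hne ?_
  have hnonneg : 0 ≤ z := re_eq_norm.1 (le_antisymm (re_le_norm z) (hre ▸ hz))
  rw [eq_re_of_ofReal_le hnonneg, hre]

theorem eq_of_tsum_mul_pow_eq {a : ℕ → ℝ} (ha₀ : ∀ i ≠ 0, 0 ≤ a i) (ha₁ : 0 < a 1) {r : ℝ}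
    (hs : Summable fun i => a i * r ^ i) {z : ℂ} (hz : ‖z‖ ≤ r)
    (h : ∑' i, (a i : ℂ) * z ^ i = ∑' i, (a i : ℂ) * (r : ℂ) ^ i) : z = r := by
  by_contra hne
  have hr : 0 ≤ r := (norm_nonneg z).trans hz
  have hsz : Summable fun i => (a i : ℂ) * z ^ i := by
    refine .of_norm_bounded hs.abs fun i => ?_
    rw [norm_mul, norm_pow, Complex.norm_real, Real.norm_eq_abs, abs_mul, abs_pow, abs_of_nonneg hr]
    gcongr
  have hle : ∀ i, ((a i : ℂ) * z ^ i).re ≤ a i * r ^ i := by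
    intro i
    rw [Complex.re_ofReal_mul]
    rcases eq_or_ne i 0 with rfl | hi
    · simp
    · refine mul_le_mul_of_nonneg_left ((Complex.re_le_norm _).trans ?_) (ha₀ i hi)
      rw [norm_pow]
      gcongr
  have hlt : ((a 1 : ℂ) * z ^ 1).re < a 1 * r ^ 1 := by
    rw [Complex.re_ofReal_mul, pow_one, pow_one]
    exact mul_lt_mul_of_pos_left (Complex.re_lt_of_norm_le_of_ne hz hne) ha₁
  have hsum_lt := Summable.tsum_lt_tsum hle hlt (Complex.hasSum_re hsz.hasSum).summable hs
  have hr_sum : ∑' i, (a i : ℂ) * (r : ℂ) ^ i = ((∑' i, a i * r ^ i : ℝ) : ℂ) := by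
    simp [Complex.ofReal_tsum]
  rw [← Complex.re_tsum hsz, h, hr_sum, Complex.ofReal_re] at hsum_lt
  exact lt_irrefl _ hsum_lt

theorem betaT_iterate_mem_Icc (β : ℝ) (m : ℕ) : (betaT β)^[m] 1 ∈ Set.Icc 0 1 := by
  cases m with
  | zero => simp
  | succ m =>
    rw [Function.iterate_succ_apply']
    exact ⟨Int.fract_nonneg _, (Int.fract_lt_one _).le⟩

theorem puCoeff_succ (β : ℝ) (i : ℕ) :
    (puCoeff β (i + 1) : ℝ) = β * (betaT β)^[i] 1 - (betaT β)^[i + 1] 1 := by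
  rw [Function.iterate_succ_apply', eq_sub_iff_add_eq]
  exact Int.floor_add_fract _

theorem puCoeff_succ_nonneg {β : ℝ} (hβ : 0 ≤ β) (i : ℕ) : 0 ≤ puCoeff β (i + 1) :=
  Int.floor_nonneg.2 (mul_nonneg hβ (betaT_iterate_mem_Icc β i).1)

theorem one_le_puCoeff_one {β : ℝ} (hβ : 1 ≤ β) : 1 ≤ puCoeff β 1 := by
  simp only [puCoeff, Function.iterate_zero_apply, mul_one]
  exact Int.le_floor.2 (by exact_mod_cast hβ)

theorem abs_puCoeff_le {β : ℝ} (hβ : 1 ≤ β) (i : ℕ) : |(puCoeff β i : ℝ)| ≤ β := by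
  cases i with
  | zero => simpa [puCoeff] using hβ
  | succ i =>
    have hx := betaT_iterate_mem_Icc β i
    rw [abs_of_nonneg (by exact_mod_cast puCoeff_succ_nonneg (by linarith) i)]
    calc (puCoeff β (i + 1) : ℝ) ≤ β * (betaT β)^[i] 1 := Int.floor_le _
      _ ≤ β := mul_le_of_le_one_right (by linarith) hx.2

theorem summable_norm_betaT_iterate_mul_pow (β : ℝ) {z : ℂ} (hz : ‖z‖ < 1) :
    Summable fun m => ‖(((betaT β)^[m] 1 : ℝ) : ℂ) * z ^ m‖ :=
  summable_norm_mul_pow_of_norm_le (C := 1) (fun m => by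
    rw [Complex.norm_real, Real.norm_of_nonneg (betaT_iterate_mem_Icc β m).1]
    exact (betaT_iterate_mem_Icc β m).2) hz

theorem summable_norm_puCoeff_mul_pow {β : ℝ} (hβ : 1 ≤ β) {z : ℂ} (hz : ‖z‖ < 1) :
    Summable fun i => ‖(puCoeff β i : ℂ) * z ^ i‖ :=
  summable_norm_mul_pow_of_norm_le
    (fun i => (Complex.norm_intCast _).trans_le (abs_puCoeff_le hβ i)) hz

theorem hasSum_puCoeff_mul_pow (β : ℝ) {z : ℂ} (hz : ‖z‖ < 1) :
    HasSum (fun i => (puCoeff β i : ℂ) * z ^ i)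
      (-(1 - (β : ℂ) * z) * ∑' m, (((betaT β)^[m] 1 : ℝ) : ℂ) * z ^ m) := by
  set x : ℕ → ℂ := fun m => (((betaT β)^[m] 1 : ℝ) : ℂ)
  set S := ∑' m, x m * z ^ m
  have hS : HasSum (fun m => x m * z ^ m) S :=
    (summable_norm_betaT_iterate_mul_pow β hz).of_norm.hasSum
  have hshift : HasSum (fun m => x (m + 1) * z ^ (m + 1)) (S - 1) := by
    have := (hasSum_nat_add_iff' (f := fun m => x m * z ^ m) 1).2 hS
    simpa only [x, Finset.sum_range_one, Function.iterate_zero_apply, Complex.ofReal_one, pow_zero,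
      mul_one] using this
  have hdigit : ∀ m, (puCoeff β (m + 1) : ℂ) * z ^ (m + 1)
      = β * z * (x m * z ^ m) - x (m + 1) * z ^ (m + 1) := fun m => by
    rw [← Complex.ofReal_intCast, puCoeff_succ]
    push_cast
    ring
  have htail : HasSum (fun m => (puCoeff β (m + 1) : ℂ) * z ^ (m + 1)) (β * z * S - (S - 1)) := by
    simpa only [hdigit] using (hS.mul_left (β * z)).sub hshift
  convert HasSum.zero_add (f := fun i => (puCoeff β i : ℂ) * z ^ i) htail using 1
  simp only [puCoeff, Int.cast_neg, Int.cast_one, pow_zero]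
  ring

theorem tsum_puCoeff_mul_inv_pow {β : ℝ} (hβ : 1 < β) :
    ∑' i, (puCoeff β i : ℂ) * ((β : ℂ)⁻¹) ^ i = 0 := by
  have hβ' : (β : ℂ) ≠ 0 := Complex.ofReal_ne_zero.2 (by linarith)
  have hnorm : ‖(β : ℂ)⁻¹‖ < 1 := by
    rw [norm_inv, Complex.norm_real, Real.norm_of_nonneg (by linarith)]
    exact inv_lt_one_of_one_lt₀ hβ
  rw [(hasSum_puCoeff_mul_pow β hnorm).tsum_eq, mul_inv_cancel₀ hβ', sub_self, neg_zero, zero_mul]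

/-- let `β > 1`. For every `z ∈ ℂ` with `|z| < 1`, the series
`f_β(z) = −1 + Σ_{i≥1} t_i z^i` and `Σ_{n≥0} T_β^n(1)·z^n` converge absolutely and
`f_β(z) = −(1 − βz)·Σ_{n≥0} T_β^n(1)·z^n`. Moreover `f_β(1/β) = 0`, the derivative
of the real function `x ↦ f_β(x)` at `1/β` is positive (so `1/β` is a simple zero),
and `f_β` has no zero in the closed disk `|z| ≤ 1/β` other than `z = 1/β`. -/
theorem parry_upper_function_basic_properties (β : ℝ) (hβ : 1 < β) :
    (∀ z : ℂ, ‖z‖ < 1 →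
      Summable (fun i : ℕ => ‖(puCoeff β i : ℂ) * z ^ i‖) ∧
      Summable (fun m : ℕ => ‖(((betaT β)^[m] 1 : ℝ) : ℂ) * z ^ m‖) ∧
      (∑' i : ℕ, (puCoeff β i : ℂ) * z ^ i)
        = -(1 - (β : ℂ) * z) * ∑' m : ℕ, (((betaT β)^[m] 1 : ℝ) : ℂ) * z ^ m) ∧
    (∑' i : ℕ, (puCoeff β i : ℂ) * ((β : ℂ)⁻¹) ^ i) = 0 ∧
    (∃ d : ℝ, 0 < d ∧
      HasDerivAt (fun x : ℝ => ∑' i : ℕ, (puCoeff β i : ℝ) * x ^ i) d β⁻¹) ∧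
    (∀ z : ℂ, ‖z‖ ≤ β⁻¹ →
      (∑' i : ℕ, (puCoeff β i : ℂ) * z ^ i) = 0 → z = ((β : ℂ))⁻¹) := by
  have hinv₀ : 0 < β⁻¹ := by positivity
  have hinv₁ : β⁻¹ < 1 := inv_lt_one_of_one_lt₀ hβ
  have hnorm : ‖β⁻¹‖ < 1 := by rwa [Real.norm_of_nonneg hinv₀.le]
  have hcoeff : ∀ i, ‖(puCoeff β i : ℝ)‖ ≤ β := abs_puCoeff_le hβ.le
  have hcoeff₀ : ∀ i ≠ 0, 0 ≤ (puCoeff β i : ℝ) := fun i hi => by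
    obtain ⟨i, rfl⟩ := Nat.exists_eq_succ_of_ne_zero hi
    exact_mod_cast puCoeff_succ_nonneg (by linarith) i
  have hcoeff₁ : (0 : ℝ) < puCoeff β 1 := by exact_mod_cast one_le_puCoeff_one hβ.le
  refine ⟨fun z hz => ⟨summable_norm_puCoeff_mul_pow hβ.le hz,
      summable_norm_betaT_iterate_mul_pow β hz, (hasSum_puCoeff_mul_pow β hz).tsum_eq⟩,
    tsum_puCoeff_mul_inv_pow hβ,
    ⟨_, tsum_mul_nat_mul_pow_pred_pos hcoeff hcoeff₀ hcoeff₁ hinv₀.le hinv₁,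
      hasDerivAt_tsum_mul_pow hcoeff hnorm⟩,
    fun z hz hzero => ?_⟩
  have hs : Summable fun i => (puCoeff β i : ℝ) * β⁻¹ ^ i :=
    .of_norm (summable_norm_mul_pow_of_norm_le hcoeff hnorm)
  have h := eq_of_tsum_mul_pow_eq hcoeff₀ hcoeff₁ hs hz (by
    push_cast
    rw [hzero, tsum_puCoeff_mul_inv_pow hβ])
  exact_mod_cast h
end
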